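/- Let p be a prime with p ≡ 3 (mod 4). Then -U_p = Q^{-p} A^{(p+1)/4} Q^{-1} A^{p(p+1)/4}, where A = [[1,0],[1,1]], Q = [[1,4/p],[0,1]], U_p = [[p,0],[0,1/p]]. In particular U_p^2 lies in the subgroup generated by A and Q. -/

import Mathlib

abbrev SL2Q := Matrix.SpecialLinearGroup (Fin 2) ℚ

/-- A = [[1,0],[1,1]] -/
def matA : SL2Q := ⟨!![1,0;1,1], by norm_num [Matrix.det_fin_two_of]⟩
/-- B = [[0,1],[-1,0]] -/
def matB : SL2Q := ⟨!![0,1;-1,0], by norm_num [Matrix.det_fin_two_of]⟩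
/-- Q_q = [[1,q],[0,1]] -/
def matQ (q : ℚ) : SL2Q := ⟨!![1,q;0,1], by norm_num [Matrix.det_fin_two_of]⟩
/-- U_p = [[p,0],[0,1/p]] -/
def matU (p : ℚ) (hp : p ≠ 0) : SL2Q := ⟨!![p,0;0,p⁻¹], by rw [Matrix.det_fin_two_of]; field_simp; norm_num⟩
/-- lower unipotent [[1,0],[x,1]] -/
def matL (x : ℚ) : SL2Q := ⟨!![1,0;x,1], by norm_num [Matrix.det_fin_two_of]⟩

/-!
Both generators are unipotent: `A ^ n = [[1,0],[n,1]]` and `Q ^ n = [[1,4n/p],[0,1]]`, so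
`Q ^ (-p) = [[1,-4],[0,1]]`. With `k = (p+1)/4`, multiplying out
`[[1,-4],[0,1]] [[1,0],[k,1]] [[1,-4/p],[0,1]] [[1,0],[pk,1]]` one factor at a time, the relation
`4k = p + 1` kills each off-diagonal entry in turn and leaves `-U_p`. Squaring removes the sign.
-/

lemma coe_matL (x : ℚ) : (matL x : Matrix (Fin 2) (Fin 2) ℚ) = !![1,0;x,1] := rfl

lemma coe_matQ (x : ℚ) : (matQ x : Matrix (Fin 2) (Fin 2) ℚ) = !![1,x;0,1] := rfl

lemma coe_matU (x : ℚ) (hx : x ≠ 0) : (matU x hx : Matrix (Fin 2) (Fin 2) ℚ) = !![x,0;0,x⁻¹] :=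
  rfl

lemma matL_mul (x y : ℚ) : matL x * matL y = matL (x + y) := by
  ext : 1
  simp [coe_matL]

lemma matQ_mul (x y : ℚ) : matQ x * matQ y = matQ (x + y) := by
  ext : 1
  simp [coe_matQ, add_comm]

def matLHom : Multiplicative ℚ →* SL2Q :=
  MonoidHom.mk' (fun x => matL x.toAdd) fun x y => (matL_mul x.toAdd y.toAdd).symm

def matQHom : Multiplicative ℚ →* SL2Q :=
  MonoidHom.mk' (fun x => matQ x.toAdd) fun x y => (matQ_mul x.toAdd y.toAdd).symm

lemma matL_zpow (x : ℚ) (n : ℤ) : matL x ^ n = matL (n * x) := by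
  simpa [matLHom, zsmul_eq_mul] using (map_zpow matLHom (Multiplicative.ofAdd x) n).symm

lemma matQ_zpow (x : ℚ) (n : ℤ) : matQ x ^ n = matQ (n * x) := by
  simpa [matQHom, zsmul_eq_mul] using (map_zpow matQHom (Multiplicative.ofAdd x) n).symm

lemma matQ_inv (x : ℚ) : (matQ x)⁻¹ = matQ (-x) := by
  simpa using matQ_zpow x (-1)

lemma matA_eq_matL_one : matA = matL 1 := rfl

lemma matQ_mul_matL_mul_matQ_mul_matL {x t k : ℚ} (hx : x ≠ 0) (htk : t * k = x + 1) :
    ((matQ (-t) * matL k * matQ (-t / x) * matL (x * k) : SL2Q) : Matrix (Fin 2) (Fin 2) ℚ) =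
      -(matU x hx : Matrix (Fin 2) (Fin 2) ℚ) := by
  have h₁ : !![1, -t; 0, 1] * !![1, 0; k, 1] = !![-x, -t; k, 1] := by
    simp [htk]
  have h₂ : !![-x, -t; k, 1] * !![1, -t / x; 0, 1] = !![-x, 0; k, -x⁻¹] := by
    have e₁ : -x * (-t / x) + -t * 1 = 0 := by field_simp; ring
    have e₂ : k * (-t / x) + 1 * 1 = -x⁻¹ := by field_simp; linear_combination -htk
    rw [Matrix.mul_fin_two, e₁, e₂]
    simp
  have h₃ : !![-x, 0; k, -x⁻¹] * !![1, 0; x * k, 1] = !![-x, 0; 0, -x⁻¹] := by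
    simp [hx]
  simp only [Matrix.SpecialLinearGroup.coe_mul, coe_matQ, coe_matL, coe_matU, h₁, h₂, h₃]
  simp

lemma neg_coe_matU_eq {n k : ℤ} (hn : (n : ℚ) ≠ 0) (hk : n + 1 = 4 * k) :
    -(matU n hn : Matrix (Fin 2) (Fin 2) ℚ) =
      ((matQ (4 / n) ^ (-n) * matA ^ k * (matQ (4 / n))⁻¹ * matA ^ (n * k) : SL2Q) :
        Matrix (Fin 2) (Fin 2) ℚ) := by
  have h4k : (4 : ℚ) * k = n + 1 := by exact_mod_cast hk.symm
  have hQn : matQ (4 / n) ^ (-n) = matQ (-4) := by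
    rw [matQ_zpow]
    congr 1
    push_cast
    field_simp
  rw [hQn, matQ_inv, ← neg_div, matA_eq_matL_one, matL_zpow, matL_zpow]
  push_cast
  rw [mul_one, mul_one]
  exact (matQ_mul_matL_mul_matQ_mul_matL hn h4k).symm

lemma Matrix.SpecialLinearGroup.sq_eq_sq_of_coe_eq_neg {n R : Type*} [Fintype n] [DecidableEq n]
    [CommRing R] [Fact (Even (Fintype.card n))] {u g : Matrix.SpecialLinearGroup n R}
    (h : (u : Matrix n n R) = -(g : Matrix n n R)) : u ^ 2 = g ^ 2 := by
  rw [show u = -g from Subtype.ext h, neg_sq]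

theorem stmt8 (p : ℕ) (hp : p.Prime) (h3 : p % 4 = 3) :
    -((matU p (Nat.cast_ne_zero.mpr hp.ne_zero) : Matrix (Fin 2) (Fin 2) ℚ)) =
      (((matQ (4/p))^(-(p:ℤ)) * matA^(((p:ℤ)+1)/4) * (matQ (4/p))⁻¹ * matA^((p:ℤ)*((p:ℤ)+1)/4) :
        SL2Q) : Matrix (Fin 2) (Fin 2) ℚ) ∧
    (matU p (Nat.cast_ne_zero.mpr hp.ne_zero))^2 ∈ Subgroup.closure {matA, matQ (4/p)} := by
  obtain ⟨k, hk⟩ : (4 : ℤ) ∣ p + 1 := by omega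
  have key := neg_coe_matU_eq (n := p) (by exact_mod_cast hp.ne_zero) hk
  rw [hk, Int.mul_ediv_cancel_left _ four_ne_zero, mul_left_comm,
    Int.mul_ediv_cancel_left _ four_ne_zero]
  simp only [Int.cast_natCast] at key
  refine ⟨key, ?_⟩
  rw [Matrix.SpecialLinearGroup.sq_eq_sq_of_coe_eq_neg (neg_eq_iff_eq_neg.mp key)]
  have hA : matA ∈ Subgroup.closure {matA, matQ (4 / p)} := Subgroup.subset_closure (by simp)
  have hQ : matQ (4 / p) ∈ Subgroup.closure {matA, matQ (4 / p)} :=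
    Subgroup.subset_closure (by simp)
  exact pow_mem (mul_mem (mul_mem (mul_mem (zpow_mem hQ _) (zpow_mem hA _)) (inv_mem hQ))
    (zpow_mem hA _)) 2
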